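/- arXiv:1812.02563 — 5 statements merged into one kernel-verified Lean document; each statement's English description precedes it below -/
import Mathlib

section
/- Let V, H be real inner product spaces with dim V = 3, and suppose J : V → End(H) satisfies the H-type condition. If z₁, z₂ ∈ V are orthonormal and z₃ ∈ V is such that (1/2)[J_{z₁}, J_{z₂}] = J_{z₃}, then z₁, z₂, z₃ is an orthonormal basis of V and J_{z₁}² = J_{z₂}² = J_{z₃}² = J_{z₁}J_{z₂}J_{z₃} = -Id_H, i.e., the subalgebra of End(H) generated by Id, J_{z₁}, J_{z₂}, J_{z₃} is isomorphic to the quaternions. -/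
/-!
Orthogonality of `z₁` and `z₂` makes `J z₁` and `J z₂` anticommute, so `J z₃ = J z₁ J z₂`, and
`J z₁, J z₂, J z₃` multiply like the quaternion units `i, j, k = ij`. The H-type relation reads
norms and inner products off such products (`J z J z = -‖z‖²`, and `J z, J w` anticommute iff
`z ⊥ w`), so `z₁, z₂, z₃` is orthonormal, hence a basis of the 3-dimensional `V`. The quaternion
basis lifts to an algebra map `ℍ → End H` onto the subalgebra they generate, injective because
`ℍ` is a division ring.
-/

open scoped RealInnerProductSpace Quaternion

theorem mul_mul_self_of_anticomm {A : Type*} [Ring A] {i j : A} (hi : i * i = -1)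
    (hj : j * j = -1) (hij : j * i = -(i * j)) : i * j * (i * j) = -1 :=
  calc i * j * (i * j) = i * (j * i) * j := by noncomm_ring
    _ = -((i * i) * (j * j)) := by rw [hij]; noncomm_ring
    _ = -1 := by rw [hi, hj]; noncomm_ring

def IsCliffordMap {V A : Type*} [NormedAddCommGroup V] [InnerProductSpace ℝ V] [Ring A]
    [Algebra ℝ A] (J : V →ₗ[ℝ] A) : Prop :=
  ∀ z w : V, J z * J w + J w * J z = algebraMap ℝ A (-2 * ⟪z, w⟫)

namespace IsCliffordMap

variable {V A : Type*} [NormedAddCommGroup V] [InnerProductSpace ℝ V] [Ring A] [Algebra ℝ A]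
  {J : V →ₗ[ℝ] A}

theorem mul_self (hJ : IsCliffordMap J) (z : V) : J z * J z = algebraMap ℝ A (-⟪z, z⟫) := by
  have h : (2 : ℝ) • (J z * J z) = (2 : ℝ) • algebraMap ℝ A (-⟪z, z⟫) := by
    rw [two_smul, hJ z z, Algebra.smul_def, ← map_mul]
    ring_nf
  exact smul_right_injective A two_ne_zero h

theorem mul_self_eq_neg_one (hJ : IsCliffordMap J) {z : V} (hz : ‖z‖ = 1) : J z * J z = -1 := by
  simp [hJ.mul_self, hz]

theorem mul_comm_eq_neg (hJ : IsCliffordMap J) {z w : V} (h : ⟪z, w⟫ = 0) :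
    J w * J z = -(J z * J w) :=
  eq_neg_of_add_eq_zero_right (by simpa [h] using hJ z w)

variable [Nontrivial A]

theorem inner_eq_zero_of_anticomm (hJ : IsCliffordMap J) {z w : V}
    (h : J z * J w + J w * J z = 0) : ⟪z, w⟫ = 0 := by
  rw [hJ z w, map_eq_zero_iff _ (algebraMap ℝ A).injective] at h
  linarith

theorem norm_eq_one_of_mul_self (hJ : IsCliffordMap J) {z : V} (h : J z * J z = -1) :
    ‖z‖ = 1 := by
  rw [hJ.mul_self, ← map_one (algebraMap ℝ A), ← map_neg,
    (algebraMap ℝ A).injective.eq_iff, neg_inj, real_inner_self_eq_norm_sq,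
    pow_eq_one_iff_of_nonneg (norm_nonneg z) two_ne_zero] at h
  exact h

theorem orthonormal_of_eq_mul (hJ : IsCliffordMap J) {z₁ z₂ z₃ : V} (h₁ : ‖z₁‖ = 1)
    (h₂ : ‖z₂‖ = 1) (h₁₂ : ⟪z₁, z₂⟫ = 0) (h₃ : J z₃ = J z₁ * J z₂) :
    Orthonormal ℝ ![z₁, z₂, z₃] := by
  have hcomm := hJ.mul_comm_eq_neg h₁₂
  have h₃₃ : ‖z₃‖ = 1 := hJ.norm_eq_one_of_mul_self <| h₃ ▸
    mul_mul_self_of_anticomm (hJ.mul_self_eq_neg_one h₁) (hJ.mul_self_eq_neg_one h₂) hcomm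
  have h₁₃ : ⟪z₁, z₃⟫ = 0 := hJ.inner_eq_zero_of_anticomm <| by
    rw [h₃, mul_assoc, hcomm, mul_neg, add_neg_cancel]
  have h₂₃ : ⟪z₂, z₃⟫ = 0 := hJ.inner_eq_zero_of_anticomm <| by
    rw [h₃, ← mul_assoc, hcomm, neg_mul, neg_add_cancel]
  simp [orthonormal_vecCons_iff, Fin.forall_fin_succ, h₁, h₂, h₃₃, h₁₂, h₁₃, h₂₃]

end IsCliffordMap

namespace QuaternionAlgebra.Basis

def ofAnticomm {R A : Type*} [CommRing R] [Ring A] [Algebra R A] {i j : A} (hi : i * i = -1)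
    (hj : j * j = -1) (hij : j * i = -(i * j)) : Basis A (-1 : R) 0 (-1) where
  i := i
  j := j
  k := i * j
  i_mul_i := by simp [hi]
  j_mul_j := by simp [hj]
  i_mul_j := rfl
  j_mul_i := by simp [hij]

noncomputable def adjoinAlgEquivQuaternion {R A : Type*} [Field R] [LinearOrder R]
    [IsStrictOrderedRing R] [Ring A] [Nontrivial A] [Algebra R A] (q : Basis A (-1 : R) 0 (-1)) :
    Algebra.adjoin R {q.i, q.j, q.k} ≃ₐ[R] ℍ[R] :=
  let f : ℍ[R] →ₐ[R] A := q.liftHom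
  (Subalgebra.equivOfEq _ _ q.range_liftHom.symm).trans
    (AlgEquiv.ofInjective f f.toRingHom.injective).symm

end QuaternionAlgebra.Basis

theorem htype_dim_three_quaternionic_general
    {V H : Type*} [NormedAddCommGroup V] [InnerProductSpace ℝ V]
    [NormedAddCommGroup H] [InnerProductSpace ℝ H] [Nontrivial H]
    (hm : Module.finrank ℝ V = 3)
    (J : V →ₗ[ℝ] Module.End ℝ H)
    (hanti : ∀ z w : V, J z * J w + J w * J z = algebraMap ℝ (Module.End ℝ H) (-2 * ⟪z, w⟫))
    (z₁ z₂ z₃ : V) (h₁ : ‖z₁‖ = 1) (h₂ : ‖z₂‖ = 1) (h₁₂ : ⟪z₁, z₂⟫ = 0)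
    (h₃ : (2⁻¹ : ℝ) • (J z₁ * J z₂ - J z₂ * J z₁) = J z₃) :
    Orthonormal ℝ ![z₁, z₂, z₃] ∧
      Submodule.span ℝ {z₁, z₂, z₃} = ⊤ ∧
      J z₁ * J z₁ = -1 ∧ J z₂ * J z₂ = -1 ∧ J z₃ * J z₃ = -1 ∧
      J z₁ * J z₂ * J z₃ = -1 ∧
      Nonempty (Algebra.adjoin ℝ {J z₁, J z₂, J z₃} ≃ₐ[ℝ] Quaternion ℝ) := by
  have hJ : IsCliffordMap J := hanti
  have e₁ := hJ.mul_self_eq_neg_one h₁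
  have e₂ := hJ.mul_self_eq_neg_one h₂
  have hcomm := hJ.mul_comm_eq_neg h₁₂
  have hk : J z₃ = J z₁ * J z₂ := by
    rw [← h₃, hcomm, sub_neg_eq_add, ← two_smul ℝ, smul_smul, inv_mul_cancel₀ two_ne_zero,
      one_smul]
  have e₃ : J z₃ * J z₃ = -1 := hk ▸ mul_mul_self_of_anticomm e₁ e₂ hcomm
  have horth := hJ.orthonormal_of_eq_mul h₁ h₂ h₁₂ hk
  have hspan := horth.linearIndependent.span_eq_top_of_card_eq_finrank (by simp [hm])
  rw [Matrix.range_cons, Matrix.range_cons_cons_empty, Set.singleton_union] at hspan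
  refine ⟨horth, hspan, e₁, e₂, e₃, by rw [← hk, e₃], ⟨?_⟩⟩
  rw [hk]
  exact (QuaternionAlgebra.Basis.ofAnticomm e₁ e₂ hcomm).adjoinAlgEquivQuaternion

/-- If `dim V = 3`, `z₁, z₂` are orthonormal and `z₃` satisfies
`½[J_{z₁}, J_{z₂}] = J_{z₃}`, then `z₁, z₂, z₃` is an orthonormal basis of `V`,
`J_{z₁}² = J_{z₂}² = J_{z₃}² = J_{z₁}J_{z₂}J_{z₃} = -Id`, and the subalgebra of `End(H)`
generated by `Id, J_{z₁}, J_{z₂}, J_{z₃}` is isomorphic to the quaternions. -/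
theorem htype_dim_three_quaternionic
    {V H : Type*} [NormedAddCommGroup V] [InnerProductSpace ℝ V] [FiniteDimensional ℝ V]
    [NormedAddCommGroup H] [InnerProductSpace ℝ H] [FiniteDimensional ℝ H] [Nontrivial H]
    (hm : Module.finrank ℝ V = 3)
    (J : V →ₗ[ℝ] Module.End ℝ H)
    (hskew : ∀ (z : V) (x y : H), ⟪J z x, y⟫ = -⟪x, J z y⟫)
    (hanti : ∀ z w : V, J z * J w + J w * J z = algebraMap ℝ (Module.End ℝ H) (-2 * ⟪z, w⟫))
    (z₁ z₂ z₃ : V) (h₁ : ‖z₁‖ = 1) (h₂ : ‖z₂‖ = 1) (h₁₂ : ⟪z₁, z₂⟫ = 0)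
    (h₃ : (2⁻¹ : ℝ) • (J z₁ * J z₂ - J z₂ * J z₁) = J z₃) :
    Orthonormal ℝ ![z₁, z₂, z₃] ∧
      Submodule.span ℝ {z₁, z₂, z₃} = ⊤ ∧
      J z₁ * J z₁ = -1 ∧ J z₂ * J z₂ = -1 ∧ J z₃ * J z₃ = -1 ∧
      J z₁ * J z₂ * J z₃ = -1 ∧
      Nonempty (Algebra.adjoin ℝ {J z₁, J z₂, J z₃} ≃ₐ[ℝ] Quaternion ℝ) :=
  htype_dim_three_quaternionic_general hm J hanti z₁ z₂ z₃ h₁ h₂ h₁₂ h₃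
end

section
/- Let V, H be real inner product spaces with J : V → End(H) satisfying the H-type condition, and let T : H × H → V be the bilinear map defined by ⟨T(x,y), z⟩ = ⟨J_z x, y⟩ for all z ∈ V. Then for every x ∈ H and w ∈ V, T(x, J_w x) = ‖x‖² w. -/
/-!
Fixing `x`, the map `z ↦ J z x` scales norms by `‖x‖`, so by polarization
`⟪J z x, J w x⟫ = ‖x‖² ⟪z, w⟫`. By the defining property of `T`, the left side is
`⟪T x (J w x), z⟫`, and `T x (J w x)` is therefore `‖x‖² w`.
-/

open scoped RealInnerProductSpace

theorem LinearMap.inner_map_map_of_norm_sq_eq_mul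
    {V H : Type*} [NormedAddCommGroup V] [InnerProductSpace ℝ V]
    [NormedAddCommGroup H] [InnerProductSpace ℝ H]
    {A : V →ₗ[ℝ] H} {c : ℝ} (hA : ∀ z, ‖A z‖ ^ 2 = c * ‖z‖ ^ 2) (z w : V) :
    ⟪A z, A w⟫ = c * ⟪z, w⟫ := by
  have hA' : ∀ z, ‖A z‖ * ‖A z‖ = c * (‖z‖ * ‖z‖) := fun z => by
    simpa only [sq] using hA z
  rw [real_inner_eq_norm_add_mul_self_sub_norm_mul_self_sub_norm_mul_self_div_two,
    real_inner_eq_norm_add_mul_self_sub_norm_mul_self_sub_norm_mul_self_div_two z w,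
    ← map_add, hA', hA', hA']
  ring

theorem htype_inner_apply_apply
    {V H : Type*} [NormedAddCommGroup V] [InnerProductSpace ℝ V]
    [NormedAddCommGroup H] [InnerProductSpace ℝ H]
    {J : V →ₗ[ℝ] H →ₗ[ℝ] H} (hJ : ∀ (z : V) (x y : H), ⟪J z x, J z y⟫ = ‖z‖ ^ 2 * ⟪x, y⟫)
    (x : H) (z w : V) :
    ⟪J z x, J w x⟫ = ‖x‖ ^ 2 * ⟪z, w⟫ :=
  LinearMap.inner_map_map_of_norm_sq_eq_mul (A := J.flip x)
    (fun z => by rw [LinearMap.flip_apply, ← real_inner_self_eq_norm_sq, hJ,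
      real_inner_self_eq_norm_sq, mul_comm]) z w

theorem htype_torsion_formula_general
    {V H : Type*} [NormedAddCommGroup V] [InnerProductSpace ℝ V]
    [NormedAddCommGroup H] [InnerProductSpace ℝ H]
    (J : V →ₗ[ℝ] H →ₗ[ℝ] H)
    (hJ : ∀ (z : V) (x y : H), ⟪J z x, J z y⟫ = ‖z‖ ^ 2 * ⟪x, y⟫)
    (T : H →ₗ[ℝ] H →ₗ[ℝ] V)
    (hT : ∀ (x y : H) (z : V), ⟪T x y, z⟫ = ⟪J z x, y⟫) :
    ∀ (x : H) (w : V), T x (J w x) = ‖x‖ ^ 2 • w := by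
  intro x w
  refine ext_inner_right ℝ fun z => ?_
  rw [hT, htype_inner_apply_apply hJ, real_inner_smul_left, real_inner_comm]

/-- If `T` is the bilinear map defined by `⟪T x y, z⟫ = ⟪J z x, y⟫`, then
`T x (J w x) = ‖x‖² w`. -/
theorem htype_torsion_formula
    {V H : Type*} [NormedAddCommGroup V] [InnerProductSpace ℝ V] [FiniteDimensional ℝ V]
    [NormedAddCommGroup H] [InnerProductSpace ℝ H] [FiniteDimensional ℝ H]
    (J : V →ₗ[ℝ] H →ₗ[ℝ] H)
    (hskew : ∀ (z : V) (x y : H), ⟪J z x, y⟫ = -⟪x, J z y⟫)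
    (hJ : ∀ (z : V) (x y : H), ⟪J z x, J z y⟫ = ‖z‖ ^ 2 * ⟪x, y⟫)
    (T : H →ₗ[ℝ] H →ₗ[ℝ] V)
    (hT : ∀ (x y : H) (z : V), ⟪T x y, z⟫ = ⟪J z x, y⟫) :
    ∀ (x : H) (w : V), T x (J w x) = ‖x‖ ^ 2 • w :=
  htype_torsion_formula_general J hJ T hT
end

section
/- Let V, H be finite-dimensional real inner product spaces with dim V = m ≥ 4, and J : V → End(H) satisfying the H-type condition. Then for any orthonormal vectors z_i, z_j, z_k ∈ V with pairwise distinct indices, the trace of J_{z_k} composed with (J_{z_i} J_{z_j}) on H is zero, i.e., Tr(J_{z_k} J_{z_i} J_{z_j}) = 0. -/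
/-!
Pick a unit vector `z` orthogonal to `zi, zj, zk`; it exists because `dim V ≥ 4`. By the
H-type relations, `J z` squares to `-1` and anticommutes with each of `J zi, J zj, J zk`,
hence with their product `T = J zk J zi J zj`. So `T` is conjugate to `-T` by the invertible
`J z`, and its trace vanishes.
-/

open scoped RealInnerProductSpace
open Module

theorem exists_norm_eq_one_forall_inner_eq_zero {𝕜 E ι : Type*} [RCLike 𝕜]
    [NormedAddCommGroup E] [InnerProductSpace 𝕜 E] [Fintype ι] (v : ι → E)
    (h : Fintype.card ι < finrank 𝕜 E) : ∃ z : E, ‖z‖ = 1 ∧ ∀ i, inner 𝕜 (v i) z = 0 := by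
  have : FiniteDimensional 𝕜 E := finite_of_finrank_pos (by omega)
  have hK : (Submodule.span 𝕜 (Set.range v))ᗮ ≠ ⊥ := by
    rw [Ne, Submodule.orthogonal_eq_bot_iff]
    intro hK
    have := finrank_range_le_card (R := 𝕜) v
    rw [Set.finrank, hK, finrank_top] at this
    omega
  obtain ⟨w, hw, hw0⟩ := Submodule.exists_mem_ne_zero_of_ne_bot hK
  refine ⟨(‖w‖⁻¹ : 𝕜) • w, norm_smul_inv_norm hw0, fun i => ?_⟩
  exact Submodule.inner_right_of_mem_orthogonal (Submodule.subset_span (Set.mem_range_self i))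
    (Submodule.smul_mem _ _ hw)

def Anticommute {R : Type*} [Mul R] [Neg R] (a b : R) : Prop := a * b = -(b * a)

namespace Anticommute

variable {R : Type*} [Ring R] {a b c : R}

theorem commute_mul (hb : Anticommute a b) (hc : Anticommute a c) : Commute a (b * c) := by
  unfold Commute SemiconjBy
  rw [← mul_assoc, hb, neg_mul, mul_assoc, hc, mul_neg, neg_neg, mul_assoc]

theorem mul_commute (hb : Anticommute a b) (hc : Commute a c) : Anticommute a (b * c) := by
  unfold Anticommute
  rw [← mul_assoc, hb, neg_mul, mul_assoc, hc.eq, mul_assoc]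

end Anticommute

theorem LinearMap.trace_eq_zero_of_anticommute {R M : Type*} [CommRing R] [IsAddTorsionFree R]
    [AddCommGroup M] [Module R M] [Module.Free R M] [Module.Finite R M] {a T : Module.End R M}
    (ha : IsUnit a) (h : Anticommute a T) : trace R M T = 0 := by
  obtain ⟨u, rfl⟩ := ha
  rw [← self_eq_neg, ← map_neg, ← trace_conj (g := T) (f := u), h, neg_mul, mul_assoc,
    Units.mul_inv, mul_one]

section HType

variable {V H : Type*} [NormedAddCommGroup V] [InnerProductSpace ℝ V] [AddCommGroup H]
  [Module ℝ H] {J : V →ₗ[ℝ] H →ₗ[ℝ] H}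

theorem anticommute_of_inner_eq_zero
    (hanti : ∀ (z w : V), J z ∘ₗ J w + J w ∘ₗ J z = (-2 * ⟪z, w⟫) • LinearMap.id)
    {z w : V} (h : ⟪z, w⟫ = 0) : Anticommute (J z) (J w) := by
  have := hanti z w
  rw [h, mul_zero, zero_smul, ← Module.End.mul_eq_comp, ← Module.End.mul_eq_comp] at this
  exact eq_neg_of_add_eq_zero_left this

theorem isUnit_of_norm_eq_one
    (hanti : ∀ (z w : V), J z ∘ₗ J w + J w ∘ₗ J z = (-2 * ⟪z, w⟫) • LinearMap.id)
    {z : V} (h : ‖z‖ = 1) : IsUnit (J z) := by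
  have hsq : J z * J z = -1 := by
    have := hanti z z
    rw [real_inner_self_eq_norm_sq, h, ← Module.End.mul_eq_comp, ← two_smul ℝ] at this
    refine smul_right_injective _ (two_ne_zero (α := ℝ)) (this.trans ?_)
    rw [← Module.End.one_eq_id]
    norm_num
  exact ⟨⟨J z, -J z, by rw [mul_neg, hsq, neg_neg], by rw [neg_mul, hsq, neg_neg]⟩, rfl⟩

end HType

theorem htype_trace_triple_zero_general
    {V H : Type*} [NormedAddCommGroup V] [InnerProductSpace ℝ V]
    [NormedAddCommGroup H] [InnerProductSpace ℝ H] [FiniteDimensional ℝ H]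
    (J : V →ₗ[ℝ] H →ₗ[ℝ] H)
    (hanti : ∀ (z w : V), J z ∘ₗ J w + J w ∘ₗ J z = (-2 * ⟪z, w⟫) • LinearMap.id)
    (hm : 4 ≤ Module.finrank ℝ V)
    (zi zj zk : V) :
    LinearMap.trace ℝ H (J zk ∘ₗ J zi ∘ₗ J zj) = 0 := by
  obtain ⟨z, hz, horth⟩ := exists_norm_eq_one_forall_inner_eq_zero (𝕜 := ℝ) ![zi, zj, zk]
    (by rw [Fintype.card_fin]; omega)
  have hJ (n : Fin 3) : Anticommute (J z) (J (![zi, zj, zk] n)) :=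
    anticommute_of_inner_eq_zero hanti (by rw [real_inner_comm, horth])
  exact LinearMap.trace_eq_zero_of_anticommute (isUnit_of_norm_eq_one hanti hz)
    ((hJ 2).mul_commute ((hJ 0).commute_mul (hJ 1)))

/-- If `dim V ≥ 4` and `zi, zj, zk` are orthonormal, then
`Tr(J_{z_k} J_{z_i} J_{z_j}) = 0`. -/
theorem htype_trace_triple_zero
    {V H : Type*} [NormedAddCommGroup V] [InnerProductSpace ℝ V] [FiniteDimensional ℝ V]
    [NormedAddCommGroup H] [InnerProductSpace ℝ H] [FiniteDimensional ℝ H]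
    (J : V →ₗ[ℝ] H →ₗ[ℝ] H)
    (hskew : ∀ (z : V) (x y : H), ⟪J z x, y⟫ = -⟪x, J z y⟫)
    (hanti : ∀ (z w : V), J z ∘ₗ J w + J w ∘ₗ J z = (-2 * ⟪z, w⟫) • LinearMap.id)
    (hm : 4 ≤ Module.finrank ℝ V)
    (zi zj zk : V) (hz : Orthonormal ℝ ![zi, zj, zk]) :
    LinearMap.trace ℝ H (J zk ∘ₗ J zi ∘ₗ J zj) = 0 :=
  htype_trace_triple_zero_general J hanti hm zi zj zk
end

section
/- Let V, H be finite-dimensional real inner product spaces with J : V → End(H) satisfying the H-type condition, m = dim V = 3, and let z₁,z₂,z₃ be an orthonormal basis of V with σ = J_{z₁}J_{z₂}J_{z₃} ≠ ±Id_H. Then H decomposes orthogonally as H⁺ ⊕ H⁻, where H^± are the ±1 eigenspaces of σ, both H⁺ and H⁻ are nonzero, and each is invariant under J_z for every z ∈ V. -/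
/-!
Each `J (z i)` squares to `-1` and anticommutes with the other two, so `σ = J₀ J₁ J₂` squares to
`1` and is self-adjoint (its adjoint is `-J₂ J₁ J₀ = σ`). An element anticommuting with two
factors of `σ` commutes with `σ`, so every `J (z i)`, and by linearity every `J w`, commutes
with `σ` and preserves its eigenspaces. The `±1` eigenspaces of a self-adjoint involution are
complementary and orthogonal, and neither vanishes since `σ ≠ ±1`.
-/

open scoped RealInnerProductSpace

namespace Module.End

variable {R M : Type*} [CommRing R] [AddCommGroup M] [Module R M] {f : End R M}

theorem add_apply_mem_eigenspace_one (hf : f * f = 1) (x : M) : x + f x ∈ f.eigenspace 1 := by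
  rw [mem_eigenspace_iff, one_smul, map_add, ← mul_apply, hf, one_apply, add_comm]

theorem sub_apply_mem_eigenspace_neg_one (hf : f * f = 1) (x : M) :
    x - f x ∈ f.eigenspace (-1) := by
  rw [mem_eigenspace_iff, map_sub, ← mul_apply, hf, one_apply, neg_one_smul, neg_sub]

theorem isCompl_eigenspace_one_neg_one [Invertible (2 : R)] (hf : f * f = 1) :
    IsCompl (f.eigenspace 1) (f.eigenspace (-1)) := by
  refine ⟨Submodule.disjoint_def.mpr fun x h₁ h₂ ↦ ?_, codisjoint_iff_le_sup.mpr fun x _ ↦ ?_⟩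
  · rw [mem_eigenspace_iff, one_smul] at h₁
    rw [mem_eigenspace_iff, h₁, neg_one_smul, eq_neg_iff_add_eq_zero, ← two_smul R] at h₂
    simpa [smul_smul] using congrArg ((⅟2 : R) • ·) h₂
  · have hx : x = (⅟2 : R) • (x + f x) + (⅟2 : R) • (x - f x) := by
      rw [← smul_add, add_add_sub_cancel, ← two_smul R, smul_smul, invOf_mul_self, one_smul]
    rw [hx]
    exact Submodule.add_mem_sup (Submodule.smul_mem _ _ (add_apply_mem_eigenspace_one hf x))
      (Submodule.smul_mem _ _ (sub_apply_mem_eigenspace_neg_one hf x))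

theorem eigenspace_one_ne_bot (hf : f * f = 1) (h : f ≠ -1) : f.eigenspace 1 ≠ ⊥ := by
  refine fun hbot ↦ h (LinearMap.ext fun x ↦ ?_)
  have := add_apply_mem_eigenspace_one hf x
  rw [hbot, Submodule.mem_bot, add_eq_zero_iff_neg_eq] at this
  rw [← this, LinearMap.neg_apply, one_apply]

theorem eigenspace_neg_one_ne_bot (hf : f * f = 1) (h : f ≠ 1) : f.eigenspace (-1) ≠ ⊥ := by
  refine fun hbot ↦ h (LinearMap.ext fun x ↦ ?_)
  have := sub_apply_mem_eigenspace_neg_one hf x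
  rw [hbot, Submodule.mem_bot, sub_eq_zero] at this
  rw [← this, one_apply]

theorem map_eigenspace_le_of_commute {g : End R M} (h : Commute f g) (μ : R) :
    (f.eigenspace μ).map g ≤ f.eigenspace μ :=
  Submodule.map_le_iff_le_comap.mpr fun _ hx ↦ mapsTo_genEigenspace_of_comm h μ 1 hx

end Module.End

section Anticommute

variable {R : Type*} [Ring R] {a b c : R}

theorem commute_mul_mul_of_anticommute (hab : a * b = -(b * a)) (hac : a * c = -(c * a))
    (hbc : b * c = -(c * b)) :
    Commute a (a * b * c) ∧ Commute b (a * b * c) ∧ Commute c (a * b * c) := by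
  -- each anticommutation conjugates a factor to its negative, and the two signs cancel
  have semiconj_neg : ∀ {x y : R}, x * y = -(y * x) → SemiconjBy x y (-y) := fun h ↦ by
    rw [SemiconjBy, h, neg_mul]
  have swap : ∀ {x y : R}, x * y = -(y * x) → y * x = -(x * y) := fun h ↦
    neg_eq_iff_eq_neg.mp h.symm
  refine ⟨?_, ?_, ?_⟩ <;> show SemiconjBy _ _ _
  · simpa using (SemiconjBy.mul_right (Commute.refl a) (semiconj_neg hab)).mul_right (semiconj_neg hac)
  · simpa using ((semiconj_neg (swap hab)).mul_right (Commute.refl b)).mul_right (semiconj_neg hbc)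
  · simpa using ((semiconj_neg (swap hac)).mul_right (semiconj_neg (swap hbc))).mul_right (Commute.refl c)

theorem mul_mul_mul_self_of_anticommute (hab : a * b = -(b * a)) (hac : a * c = -(c * a))
    (hbc : b * c = -(c * b)) : a * b * c * (a * b * c) = -(a * a * (b * b) * (c * c)) :=
  calc a * b * c * (a * b * c) = a * b * c * a * (b * c) := by simp only [mul_assoc]
    _ = a * a * (b * (c * b) * c) := by
        rw [← (commute_mul_mul_of_anticommute hab hac hbc).1.eq]; simp only [mul_assoc]
    _ = -(a * a * (b * b) * (c * c)) := by
        rw [neg_eq_iff_eq_neg.mp hbc.symm]; simp only [mul_neg, neg_mul, mul_assoc]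

theorem mul_mul_rev_of_anticommute (hab : a * b = -(b * a)) (hac : a * c = -(c * a))
    (hbc : b * c = -(c * b)) : c * b * a = -(a * b * c) :=
  calc c * b * a = -(b * (c * a)) := by rw [neg_eq_iff_eq_neg.mp hbc.symm, neg_mul, mul_assoc]
    _ = -(a * b * c) := by
        rw [neg_eq_iff_eq_neg.mp hac.symm, mul_neg, neg_neg, ← mul_assoc,
          neg_eq_iff_eq_neg.mp hab.symm, neg_mul]

end Anticommute

theorem LinearMap.commute_apply_of_span_eq_top {K V A ι : Type*} [CommSemiring K]
    [AddCommMonoid V] [Module K V] [Semiring A] [Algebra K A] (J : V →ₗ[K] A) {z : ι → V}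
    (hspan : Submodule.span K (Set.range z) = ⊤) {T : A} (h : ∀ i, Commute (J (z i)) T)
    (w : V) : Commute (J w) T := by
  have hle : Submodule.span K (Set.range z) ≤
      (Subalgebra.centralizer K {T}).toSubmodule.comap J := by
    rw [Submodule.span_le]
    rintro _ ⟨i, rfl⟩ _ rfl
    exact (h i).eq.symm
  exact (hle (hspan ▸ Submodule.mem_top : w ∈ _) T rfl).symm

section Skew

variable {E : Type*} [NormedAddCommGroup E] [InnerProductSpace ℝ E] {A B C : Module.End ℝ E}

theorem LinearMap.isSymmetric_mul_mul_of_skew (hA : ∀ x y, ⟪A x, y⟫ = -⟪x, A y⟫)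
    (hB : ∀ x y, ⟪B x, y⟫ = -⟪x, B y⟫) (hC : ∀ x y, ⟪C x, y⟫ = -⟪x, C y⟫)
    (hrev : C * B * A = -(A * B * C)) : (A * B * C).IsSymmetric := fun x y ↦ by
  have := congrArg (⟪x, · y⟫) hrev
  simp only [Module.End.mul_apply, LinearMap.neg_apply, inner_neg_right] at this ⊢
  rw [hA, hB, hC, this]
  ring

end Skew

section HType

variable {V H : Type*} [NormedAddCommGroup V] [InnerProductSpace ℝ V]
  [NormedAddCommGroup H] [InnerProductSpace ℝ H] {J : V →ₗ[ℝ] Module.End ℝ H}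

theorem htype_mul_self_eq_neg_one
    (hanti : ∀ z w : V, J z * J w + J w * J z = algebraMap ℝ (Module.End ℝ H) (-2 * ⟪z, w⟫))
    {z : V} (hz : ‖z‖ = 1) : J z * J z = -1 := by
  have h := hanti z z
  rw [real_inner_self_eq_norm_sq, hz, ← two_smul ℝ] at h
  refine smul_right_injective _ (two_ne_zero (α := ℝ)) (h.trans ?_)
  simp [Algebra.algebraMap_eq_smul_one]

theorem htype_anticommute
    (hanti : ∀ z w : V, J z * J w + J w * J z = algebraMap ℝ (Module.End ℝ H) (-2 * ⟪z, w⟫))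
    {z w : V} (h : ⟪z, w⟫ = 0) : J z * J w = -(J w * J z) := by
  rw [eq_neg_iff_add_eq_zero, hanti, h, mul_zero, map_zero]

end HType

theorem htype_sigma_eigenspace_splitting_general
    {V H : Type*} [NormedAddCommGroup V] [InnerProductSpace ℝ V]
    [NormedAddCommGroup H] [InnerProductSpace ℝ H]
    (J : V →ₗ[ℝ] Module.End ℝ H)
    (hskew : ∀ (z : V) (x y : H), ⟪J z x, y⟫ = -⟪x, J z y⟫)
    (hanti : ∀ z w : V, J z * J w + J w * J z = algebraMap ℝ (Module.End ℝ H) (-2 * ⟪z, w⟫))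
    (z : Fin 3 → V) (hz : Orthonormal ℝ z)
    (hspan : Submodule.span ℝ (Set.range z) = ⊤)
    (hσ : J (z 0) * J (z 1) * J (z 2) ≠ 1 ∧ J (z 0) * J (z 1) * J (z 2) ≠ -1) :
    IsCompl (Module.End.eigenspace (J (z 0) * J (z 1) * J (z 2)) 1)
        (Module.End.eigenspace (J (z 0) * J (z 1) * J (z 2)) (-1)) ∧
      (∀ x ∈ Module.End.eigenspace (J (z 0) * J (z 1) * J (z 2)) 1,
        ∀ y ∈ Module.End.eigenspace (J (z 0) * J (z 1) * J (z 2)) (-1), ⟪x, y⟫ = 0) ∧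
      Module.End.eigenspace (J (z 0) * J (z 1) * J (z 2)) 1 ≠ ⊥ ∧
      Module.End.eigenspace (J (z 0) * J (z 1) * J (z 2)) (-1) ≠ ⊥ ∧
      (∀ w : V,
        Submodule.map (J w) (Module.End.eigenspace (J (z 0) * J (z 1) * J (z 2)) 1) ≤
          Module.End.eigenspace (J (z 0) * J (z 1) * J (z 2)) 1 ∧
        Submodule.map (J w) (Module.End.eigenspace (J (z 0) * J (z 1) * J (z 2)) (-1)) ≤
          Module.End.eigenspace (J (z 0) * J (z 1) * J (z 2)) (-1)) := by
  have hanticomm : ∀ {i j : Fin 3}, i ≠ j → J (z i) * J (z j) = -(J (z j) * J (z i)) :=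
    fun hij ↦ htype_anticommute hanti (hz.2 hij)
  have h01 := hanticomm (i := 0) (j := 1) (by decide)
  have h02 := hanticomm (i := 0) (j := 2) (by decide)
  have h12 := hanticomm (i := 1) (j := 2) (by decide)
  set σ := J (z 0) * J (z 1) * J (z 2)
  have hσσ : σ * σ = 1 := by
    rw [mul_mul_mul_self_of_anticommute h01 h02 h12]
    simp only [htype_mul_self_eq_neg_one hanti (hz.1 _)]
    noncomm_ring
  have hcomm : ∀ w, Commute (J w) σ := by
    obtain ⟨c0, c1, c2⟩ := commute_mul_mul_of_anticommute h01 h02 h12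
    refine J.commute_apply_of_span_eq_top hspan fun i ↦ ?_
    fin_cases i <;> assumption
  have hsymm : σ.IsSymmetric := LinearMap.isSymmetric_mul_mul_of_skew (hskew _) (hskew _)
    (hskew _) (mul_mul_rev_of_anticommute h01 h02 h12)
  refine ⟨Module.End.isCompl_eigenspace_one_neg_one hσσ,
    fun x hx y hy ↦ hsymm.orthogonalFamily_eigenspaces (by norm_num) ⟨x, hx⟩ ⟨y, hy⟩,
    Module.End.eigenspace_one_ne_bot hσσ hσ.2, Module.End.eigenspace_neg_one_ne_bot hσσ hσ.1,
    fun w ↦ ⟨?_, ?_⟩⟩ <;>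
  exact Module.End.map_eigenspace_le_of_commute (hcomm w).symm _

/-- If `dim V = 3`, `z₁, z₂, z₃` is an orthonormal basis and
`σ = J_{z₁}J_{z₂}J_{z₃} ≠ ±Id`, then `H` splits orthogonally into the nonzero `±1`
eigenspaces of `σ`, each invariant under every `J_z`. -/
theorem htype_sigma_eigenspace_splitting
    {V H : Type*} [NormedAddCommGroup V] [InnerProductSpace ℝ V] [FiniteDimensional ℝ V]
    [NormedAddCommGroup H] [InnerProductSpace ℝ H] [FiniteDimensional ℝ H] [Nontrivial H]
    (hm : Module.finrank ℝ V = 3)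
    (J : V →ₗ[ℝ] Module.End ℝ H)
    (hskew : ∀ (z : V) (x y : H), ⟪J z x, y⟫ = -⟪x, J z y⟫)
    (hanti : ∀ z w : V, J z * J w + J w * J z = algebraMap ℝ (Module.End ℝ H) (-2 * ⟪z, w⟫))
    (z : Fin 3 → V) (hz : Orthonormal ℝ z)
    (hspan : Submodule.span ℝ (Set.range z) = ⊤)
    (hσ : J (z 0) * J (z 1) * J (z 2) ≠ 1 ∧ J (z 0) * J (z 1) * J (z 2) ≠ -1) :
    IsCompl (Module.End.eigenspace (J (z 0) * J (z 1) * J (z 2)) 1)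
        (Module.End.eigenspace (J (z 0) * J (z 1) * J (z 2)) (-1)) ∧
      (∀ x ∈ Module.End.eigenspace (J (z 0) * J (z 1) * J (z 2)) 1,
        ∀ y ∈ Module.End.eigenspace (J (z 0) * J (z 1) * J (z 2)) (-1), ⟪x, y⟫ = 0) ∧
      Module.End.eigenspace (J (z 0) * J (z 1) * J (z 2)) 1 ≠ ⊥ ∧
      Module.End.eigenspace (J (z 0) * J (z 1) * J (z 2)) (-1) ≠ ⊥ ∧
      (∀ w : V,
        Submodule.map (J w) (Module.End.eigenspace (J (z 0) * J (z 1) * J (z 2)) 1) ≤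
          Module.End.eigenspace (J (z 0) * J (z 1) * J (z 2)) 1 ∧
        Submodule.map (J w) (Module.End.eigenspace (J (z 0) * J (z 1) * J (z 2)) (-1)) ≤
          Module.End.eigenspace (J (z 0) * J (z 1) * J (z 2)) (-1)) :=
  htype_sigma_eigenspace_splitting_general J hskew hanti z hz hspan hσ
end

section
/- Let V be a finite-dimensional real inner product space, and let Ψ : V × V → Cl₂(V) be a bilinear map satisfying, for all u, v ∈ V: (1) Ψ(u,v) = -Ψ(v,u), and (2) Ψ(u,v)·v + v·Ψ(u,v) = 0 in Cl(V). Then there exists a (possibly point-independent) scalar function such that for orthonormal u ⊥ v, Ψ(u,v) is a scalar multiple of u·v; moreover if additionally the coefficient is independent of the orthonormal pair (u,v), then Ψ(u,v) = -κ(u·v + ⟨u,v⟩) for some κ ∈ ℝ and all u, v ∈ V. -/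
open scoped RealInnerProductSpace

/-- The quadratic form `u ↦ -‖u‖²`, giving the Clifford convention `u·u = -‖u‖²`. -/
noncomputable def negNormSq (V : Type*) [NormedAddCommGroup V] [InnerProductSpace ℝ V] :
    QuadraticForm ℝ V :=
  -(LinearMap.BilinMap.toQuadraticMap (innerₗ V))

/-- `Cl₂(V)`: the subspace of `Cl(V)` spanned by products `u·v` of orthogonal vectors. -/
noncomputable def Cl2 (V : Type*) [NormedAddCommGroup V] [InnerProductSpace ℝ V] :
    Submodule ℝ (CliffordAlgebra (negNormSq V)) :=
  Submodule.span ℝ {c | ∃ u v : V, ⟪u, v⟫ = 0 ∧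
    c = CliffordAlgebra.ι (negNormSq V) u * CliffordAlgebra.ι (negNormSq V) v}

/-!
For a unit vector `w`, the map `y ↦ y + w y w` doubles the part of `y` anticommuting with `w` and
kills the part commuting with it. For an orthonormal pair `u, v`, the composite of these maps for
`v` and then `u` sends every product of two vectors into `ℝ · uv`, hence maps `Cl₂(V)` into
`ℝ · uv`; but it multiplies `Ψ(u,v)` by `4`, since by (1) and (2) `Ψ(u,v)` anticommutes with both
`u` and `v`.

For the second part, `Ψ - c • (u·v + ⟨u,v⟩)` is an alternating bilinear map vanishing on
orthonormal pairs, hence on orthogonal pairs by scaling, hence everywhere after splitting `v`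
into a multiple of `u` and a vector orthogonal to `u`.
-/

open CliffordAlgebra

section

variable {V : Type*} [NormedAddCommGroup V] [InnerProductSpace ℝ V]

lemma negNormSq_apply (w : V) : negNormSq V w = -⟪w, w⟫ := by
  simp [negNormSq]

lemma polar_negNormSq (a b : V) : QuadraticMap.polar (negNormSq V) a b = -2 * ⟪a, b⟫ := by
  simp only [QuadraticMap.polar, negNormSq_apply, inner_add_add_self, real_inner_comm a b]
  ring

lemma negNormSq_isOrtho {a b : V} (h : ⟪a, b⟫ = 0) : (negNormSq V).IsOrtho a b := by
  rw [← QuadraticMap.isOrtho_polarBilin, QuadraticMap.polarBilin_apply_apply, polar_negNormSq, h,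
    mul_zero]

lemma ι_mul_self_of_norm_eq_one {w : V} (hw : ‖w‖ = 1) :
    ι (negNormSq V) w * ι (negNormSq V) w = -1 := by
  rw [ι_sq_scalar, negNormSq_apply, real_inner_self_eq_norm_sq, hw]
  simp

lemma ι_mul_ι_negNormSq_comm (a b : V) :
    ι (negNormSq V) a * ι (negNormSq V) b =
      (-2 * ⟪a, b⟫) • 1 - ι (negNormSq V) b * ι (negNormSq V) a := by
  rw [ι_mul_ι_comm, polar_negNormSq, Algebra.algebraMap_eq_smul_one]

noncomputable def addSandwich (w : V) :
    CliffordAlgebra (negNormSq V) →ₗ[ℝ] CliffordAlgebra (negNormSq V) :=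
  LinearMap.id +
    LinearMap.mulLeft ℝ (ι (negNormSq V) w) ∘ₗ LinearMap.mulRight ℝ (ι (negNormSq V) w)

lemma addSandwich_apply (w : V) (y : CliffordAlgebra (negNormSq V)) :
    addSandwich w y = y + ι (negNormSq V) w * y * ι (negNormSq V) w := by
  simp [addSandwich, mul_assoc]

lemma addSandwich_of_anticomm {w : V} (hw : ‖w‖ = 1) {y : CliffordAlgebra (negNormSq V)}
    (hy : y * ι (negNormSq V) w + ι (negNormSq V) w * y = 0) :
    addSandwich w y = (2 : ℝ) • y := by
  rw [addSandwich_apply, eq_neg_of_add_eq_zero_right hy, neg_mul, mul_assoc,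
    ι_mul_self_of_norm_eq_one hw, mul_neg_one, neg_neg, two_smul]

lemma addSandwich_ι_mul_ι {w : V} (hw : ‖w‖ = 1) (a b : V) :
    addSandwich w (ι (negNormSq V) a * ι (negNormSq V) b) =
      (2 : ℝ) • (ι (negNormSq V) (⟪w, b⟫ • a - ⟪w, a⟫ • b) * ι (negNormSq V) w) := by
  set W := ι (negNormSq V) w
  set A := ι (negNormSq V) a
  set B := ι (negNormSq V) b
  have hWBW : W * B * W = (-2 * ⟪w, b⟫) • W + B := by
    rw [ι_mul_ι_negNormSq_comm, sub_mul, mul_assoc, ι_mul_self_of_norm_eq_one hw, smul_mul_assoc,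
      one_mul, mul_neg_one, sub_neg_eq_add]
  have hWABW : W * (A * B) * W = (-2 * ⟪w, a⟫) • (B * W) - A * ((-2 * ⟪w, b⟫) • W + B) := by
    rw [← hWBW, ← mul_assoc, ι_mul_ι_negNormSq_comm, sub_mul, sub_mul, smul_mul_assoc,
      smul_mul_assoc, one_mul, mul_assoc, mul_assoc, mul_assoc]
  rw [addSandwich_apply, hWABW, map_sub, map_smul, map_smul, sub_mul, smul_mul_assoc,
    smul_mul_assoc, mul_add, mul_smul_comm]
  module

lemma addSandwich_addSandwich_ι_mul_ι {u w : V} (huw : ⟪u, w⟫ = 0) (hu : ‖u‖ = 1)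
    (hw : ‖w‖ = 1) (a b : V) :
    addSandwich u (addSandwich w (ι (negNormSq V) a * ι (negNormSq V) b)) =
      (4 * ⟪u, ⟪w, b⟫ • a - ⟪w, a⟫ • b⟫) • (ι (negNormSq V) u * ι (negNormSq V) w) := by
  have hwu : (negNormSq V).IsOrtho w u := negNormSq_isOrtho (by rwa [real_inner_comm])
  rw [addSandwich_ι_mul_ι hw, map_smul, addSandwich_ι_mul_ι hu, huw, zero_smul, zero_sub,
    map_neg, map_smul, neg_mul, smul_mul_assoc, ι_mul_ι_comm_of_isOrtho hwu]
  module

theorem exists_eq_smul_ι_mul_ι_of_mem_Cl2 {u v : V} (huv : ⟪u, v⟫ = 0) (hu : ‖u‖ = 1)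
    (hv : ‖v‖ = 1) {x : CliffordAlgebra (negNormSq V)} (hx : x ∈ Cl2 V)
    (hxu : x * ι (negNormSq V) u + ι (negNormSq V) u * x = 0)
    (hxv : x * ι (negNormSq V) v + ι (negNormSq V) v * x = 0) :
    ∃ c : ℝ, x = c • (ι (negNormSq V) u * ι (negNormSq V) v) := by
  set S := addSandwich u ∘ₗ addSandwich v
  have hS : Cl2 V ≤ (ℝ ∙ (ι (negNormSq V) u * ι (negNormSq V) v)).comap S := by
    refine Submodule.span_le.mpr ?_
    rintro _ ⟨a, b, -, rfl⟩
    rw [SetLike.mem_coe, Submodule.mem_comap, LinearMap.comp_apply,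
      addSandwich_addSandwich_ι_mul_ι huv hu hv]
    exact Submodule.smul_mem _ _ (Submodule.mem_span_singleton_self _)
  have hSx : S x = (4 : ℝ) • x := by
    rw [LinearMap.comp_apply, addSandwich_of_anticomm hv hxv, map_smul,
      addSandwich_of_anticomm hu hxu, smul_smul]
    norm_num
  obtain ⟨c, hc⟩ := Submodule.mem_span_singleton.mp (hS hx)
  refine ⟨c / 4, ?_⟩
  rw [div_eq_inv_mul, mul_smul, hc, hSx, inv_smul_smul₀ four_ne_zero]

/-- `u·v + ⟨u,v⟩ = (u·v - v·u) / 2` is the wedge product of `u` and `v` inside `Cl(V)`. -/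
noncomputable def cliffordWedge : V →ₗ[ℝ] V →ₗ[ℝ] CliffordAlgebra (negNormSq V) :=
  (LinearMap.mul ℝ _).compl₁₂ (ι (negNormSq V)) (ι (negNormSq V)) +
    (innerₗ V).compr₂ (Algebra.linearMap ℝ _)

lemma cliffordWedge_apply (u v : V) :
    cliffordWedge u v = ι (negNormSq V) u * ι (negNormSq V) v + ⟪u, v⟫ • 1 := by
  simp [cliffordWedge, Algebra.algebraMap_eq_smul_one]

lemma cliffordWedge_isAlt : (cliffordWedge (V := V)).IsAlt := by
  intro u
  rw [cliffordWedge_apply, ι_sq_scalar, negNormSq_apply, Algebra.algebraMap_eq_smul_one, neg_smul,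
    neg_add_cancel]

lemma cliffordWedge_of_inner_eq_zero {u v : V} (h : ⟪u, v⟫ = 0) :
    cliffordWedge u v = ι (negNormSq V) u * ι (negNormSq V) v := by
  rw [cliffordWedge_apply, h, zero_smul, add_zero]

lemma LinearMap.apply_eq_zero_of_inner_eq_zero {M : Type*} [AddCommGroup M] [Module ℝ M]
    {B : V →ₗ[ℝ] V →ₗ[ℝ] M}
    (h : ∀ u v : V, ⟪u, v⟫ = 0 → ‖u‖ = 1 → ‖v‖ = 1 → B u v = 0) {u v : V} (huv : ⟪u, v⟫ = 0) :
    B u v = 0 := by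
  rcases eq_or_ne u 0 with rfl | hu
  · simp
  rcases eq_or_ne v 0 with rfl | hv
  · simp
  have hunit := h (‖u‖⁻¹ • u) (‖v‖⁻¹ • v)
    (by rw [real_inner_smul_left, real_inner_smul_right, huv, mul_zero, mul_zero])
    (norm_smul_inv_norm hu) (norm_smul_inv_norm hv)
  simpa [hu, hv] using hunit

theorem LinearMap.IsAlt.eq_zero_of_orthonormal {M : Type*} [AddCommGroup M] [Module ℝ M]
    {B : V →ₗ[ℝ] V →ₗ[ℝ] M} (hB : B.IsAlt)
    (h : ∀ u v : V, ⟪u, v⟫ = 0 → ‖u‖ = 1 → ‖v‖ = 1 → B u v = 0) : B = 0 := by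
  refine LinearMap.ext₂ fun u v => ?_
  rcases eq_or_ne u 0 with rfl | hu
  · simp
  set t := ⟪u, v⟫ / ⟪u, u⟫
  have hperp : ⟪u, v - t • u⟫ = 0 := by
    rw [inner_sub_right, real_inner_smul_right, div_mul_cancel₀ _ (inner_self_ne_zero.mpr hu),
      sub_self]
  calc B u v = B u (v - t • u) + t • B u u := by rw [map_sub, map_smul, sub_add_cancel]
    _ = 0 := by rw [apply_eq_zero_of_inner_eq_zero h hperp, hB u, smul_zero, add_zero]

end

theorem psi_classification_general
    {V : Type*} [NormedAddCommGroup V] [InnerProductSpace ℝ V]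
    (Ψ : V →ₗ[ℝ] V →ₗ[ℝ] CliffordAlgebra (negNormSq V))
    (hmem : ∀ u v : V, Ψ u v ∈ Cl2 V)
    (h1 : ∀ u v : V, Ψ u v = -Ψ v u)
    (h2 : ∀ u v : V,
      Ψ u v * CliffordAlgebra.ι (negNormSq V) v
        + CliffordAlgebra.ι (negNormSq V) v * Ψ u v = 0) :
    (∀ u v : V, ⟪u, v⟫ = 0 → ‖u‖ = 1 → ‖v‖ = 1 →
      ∃ c : ℝ, Ψ u v = c • (CliffordAlgebra.ι (negNormSq V) u *
        CliffordAlgebra.ι (negNormSq V) v)) ∧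
    ((∃ c : ℝ, ∀ u v : V, ⟪u, v⟫ = 0 → ‖u‖ = 1 → ‖v‖ = 1 →
        Ψ u v = c • (CliffordAlgebra.ι (negNormSq V) u *
          CliffordAlgebra.ι (negNormSq V) v)) →
      ∃ κ : ℝ, ∀ u v : V,
        Ψ u v = (-κ) • (CliffordAlgebra.ι (negNormSq V) u *
          CliffordAlgebra.ι (negNormSq V) v + (⟪u, v⟫ : ℝ) • 1)) := by
  have h2_left (u v : V) : Ψ u v * ι (negNormSq V) u + ι (negNormSq V) u * Ψ u v = 0 := by
    rw [← neg_eq_zero, neg_add, ← neg_mul, ← mul_neg, ← h1 v u]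
    exact h2 v u
  refine ⟨fun u v huv hu hv =>
    exists_eq_smul_ι_mul_ι_of_mem_Cl2 huv hu hv (hmem u v) (h2_left u v) (h2 u v), ?_⟩
  rintro ⟨c, hc⟩
  have hΨ : Ψ.IsAlt := fun u => by
    have h := h1 u u
    rwa [eq_neg_iff_add_eq_zero, ← two_smul ℝ, smul_eq_zero, or_iff_right two_ne_zero] at h
  have hΨc : Ψ = c • cliffordWedge := by
    refine sub_eq_zero.mp
      (LinearMap.IsAlt.eq_zero_of_orthonormal (fun u => ?_) fun u v huv hu hv => ?_)
    · simp [hΨ u, cliffordWedge_isAlt u]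
    · simp [hc u v huv hu hv, cliffordWedge_of_inner_eq_zero huv]
  refine ⟨-c, fun u v => ?_⟩
  rw [neg_neg, ← cliffordWedge_apply]
  exact LinearMap.congr_fun₂ hΨc u v

/-- A bilinear `Ψ : V × V → Cl₂(V)` which is skew-symmetric and satisfies
`Ψ(u,v)·v + v·Ψ(u,v) = 0` takes, on orthonormal pairs, values proportional to `u·v`;
and if the coefficient is independent of the orthonormal pair, then
`Ψ(u,v) = -κ(u·v + ⟨u,v⟩)` for some `κ ∈ ℝ` and all `u, v`. -/
theorem psi_classification
    {V : Type*} [NormedAddCommGroup V] [InnerProductSpace ℝ V] [FiniteDimensional ℝ V]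
    (hm : 2 ≤ Module.finrank ℝ V)
    (Ψ : V →ₗ[ℝ] V →ₗ[ℝ] CliffordAlgebra (negNormSq V))
    (hmem : ∀ u v : V, Ψ u v ∈ Cl2 V)
    (h1 : ∀ u v : V, Ψ u v = -Ψ v u)
    (h2 : ∀ u v : V,
      Ψ u v * CliffordAlgebra.ι (negNormSq V) v
        + CliffordAlgebra.ι (negNormSq V) v * Ψ u v = 0) :
    (∀ u v : V, ⟪u, v⟫ = 0 → ‖u‖ = 1 → ‖v‖ = 1 →
      ∃ c : ℝ, Ψ u v = c • (CliffordAlgebra.ι (negNormSq V) u *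
        CliffordAlgebra.ι (negNormSq V) v)) ∧
    ((∃ c : ℝ, ∀ u v : V, ⟪u, v⟫ = 0 → ‖u‖ = 1 → ‖v‖ = 1 →
        Ψ u v = c • (CliffordAlgebra.ι (negNormSq V) u *
          CliffordAlgebra.ι (negNormSq V) v)) →
      ∃ κ : ℝ, ∀ u v : V,
        Ψ u v = (-κ) • (CliffordAlgebra.ι (negNormSq V) u *
          CliffordAlgebra.ι (negNormSq V) v + (⟪u, v⟫ : ℝ) • 1)) :=
  psi_classification_general Ψ hmem h1 h2
end
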